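/- Let q be a prime power, n coprime to q and not divisible by 4, and C a cyclic code of length n over F_q whose defining set contains {0, 1, 2, 4, 5, 6, 8}. Then the minimum distance of C is at least 6. -/

import Mathlib

open Polynomial Finset

private lemma aux_sq {K : Type*} [Field K] {n : ℕ} (hn : 0 < n) (h4 : ¬ (4 ∣ n))
    {x y : K} (hx : x ^ n = 1) (hy : y ^ n = 1) (hxy : x ^ 4 = y ^ 4) : x ^ 2 = y ^ 2 := by
  have hy0 : y ≠ 0 := by
    intro h; rw [h, zero_pow hn.ne'] at hy; exact zero_ne_one hy
  have hw4 : (x * y⁻¹) ^ 4 = 1 := by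
    rw [mul_pow, hxy, inv_pow, mul_inv_cancel₀ (pow_ne_zero _ hy0)]
  have hwn : (x * y⁻¹) ^ n = 1 := by
    rw [mul_pow, hx, inv_pow, hy, inv_one, one_mul]
  have hg : (x * y⁻¹) ^ Nat.gcd n 4 = 1 := by rw [pow_gcd_eq_one]; exact ⟨hwn, hw4⟩
  have hgd : ∀ g : ℕ, g ∣ 4 → g ∣ n → g ∣ 2 := by
    intro g hg4 hgn
    have hle : g ≤ 4 := Nat.le_of_dvd (by norm_num) hg4
    interval_cases g
    · exact absurd hg4 (by decide)
    · decide
    · decide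
    · exact absurd hg4 (by decide)
    · exact absurd hgn h4
  obtain ⟨d, hd⟩ := hgd _ (Nat.gcd_dvd_right n 4) (Nat.gcd_dvd_left n 4)
  have hw2 : (x * y⁻¹) ^ 2 = 1 := by rw [hd, pow_mul, hg, one_pow]
  rw [mul_pow, inv_pow] at hw2
  field_simp at hw2
  exact hw2

private lemma aux_three {K : Type*} [Field K] {n : ℕ} (hn : 0 < n) (h4 : ¬ (4 ∣ n))
    {x y z : K} (hx : x ^ n = 1) (hy : y ^ n = 1) (hz : z ^ n = 1)
    (hxy : x ^ 4 = y ^ 4) (hxz : x ^ 4 = z ^ 4) : x = y ∨ x = z ∨ y = z := by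
  have h1 : x ^ 2 = y ^ 2 := aux_sq hn h4 hx hy hxy
  have h2 : x ^ 2 = z ^ 2 := aux_sq hn h4 hx hz hxz
  have e1 : (x - y) * (x + y) = 0 := by linear_combination h1
  have e2 : (x - z) * (x + z) = 0 := by linear_combination h2
  rcases mul_eq_zero.mp e1 with f1 | f1
  · exact Or.inl (sub_eq_zero.mp f1)
  rcases mul_eq_zero.mp e2 with f2 | f2
  · exact Or.inr (Or.inl (sub_eq_zero.mp f2))
  · exact Or.inr (Or.inr (by linear_combination f1 - f2))

private lemma aux_core {K : Type*} [Field K] {n : ℕ} (hn : 0 < n) (h4 : ¬ (4 ∣ n))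
    {t : ℕ} (ht : 0 < t) (hlt : t < 6) (β b : Fin t → K) (P : ℕ → K)
    (hβinj : Function.Injective β) (hβn : ∀ j, β j ^ n = 1) (hb : ∀ j, b j ≠ 0)
    (hPsum : ∀ i, P i = ∑ j, b j * β j ^ i)
    (hP : ∀ i ∈ ({0, 1, 2, 4, 5, 6, 8} : Finset ℕ), P i = 0) : False := by
  classical
  have hP0 : P 0 = 0 := hP 0 (by decide)
  have hP1 : P 1 = 0 := hP 1 (by decide)
  have hP2 : P 2 = 0 := hP 2 (by decide)
  have hP4 : P 4 = 0 := hP 4 (by decide)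
  have hP5 : P 5 = 0 := hP 5 (by decide)
  have hP6 : P 6 = 0 := hP 6 (by decide)
  have hP8 : P 8 = 0 := hP 8 (by decide)
  -- Vandermonde finisher
  have hVF : (∀ i : Fin t, P (i : ℕ) = 0) → False := by
    intro h
    have hb0 : b = 0 :=
      Matrix.eq_zero_of_forall_pow_sum_mul_pow_eq_zero hβinj
        (fun i => by rw [← hPsum]; exact h i)
    exact hb ⟨0, ht⟩ (congrFun hb0 _)
  -- the locator polynomial
  set σ : Polynomial K := ∏ j : Fin t, (X - C (β j)) with hσdef
  have hσm : σ.Monic := monic_prod_of_monic _ _ fun j _ => monic_X_sub_C _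
  have hσd : σ.natDegree = t := by
    rw [hσdef, natDegree_prod_of_monic _ _ fun j _ => monic_X_sub_C _]
    simp
  have hσt : σ.coeff t = 1 := by rw [← hσd]; exact hσm.coeff_natDegree
  have hev : ∀ j, σ.eval (β j) = 0 := by
    intro j
    rw [hσdef, eval_prod]
    exact Finset.prod_eq_zero (mem_univ j) (by simp)
  have hevr : ∀ j, ∑ k ∈ Finset.range (t + 1), σ.coeff k * β j ^ k = 0 := by
    intro j
    have h := hev j
    rwa [eval_eq_sum_range, hσd] at h
  have hrec : ∀ i : ℕ, ∑ k ∈ Finset.range (t + 1), σ.coeff k * P (i + k) = 0 := by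
    intro i
    have hswap : ∑ k ∈ Finset.range (t + 1), σ.coeff k * P (i + k)
        = ∑ j : Fin t, (b j * β j ^ i) *
            (∑ k ∈ Finset.range (t + 1), σ.coeff k * β j ^ k) := by
      simp only [hPsum, Finset.mul_sum]
      rw [Finset.sum_comm]
      refine Finset.sum_congr rfl fun j _ => Finset.sum_congr rfl fun k _ => ?_
      rw [pow_add]; ring
    rw [hswap]
    simp [hevr]
  -- case analysis on the weight
  clear hσm hσd hev
  clear_value σ
  clear hσdef
  interval_cases t
  · -- t = 1
    exact hVF fun i => by
      have hi := i.isLt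
      have h' : (i : ℕ) = 0 := by omega
      rw [h']; exact hP0
  · -- t = 2
    exact hVF fun i => by
      have hi := i.isLt
      have h' : (i : ℕ) = 0 ∨ (i : ℕ) = 1 := by omega
      rcases h' with h' | h' <;> rw [h'] <;> assumption
  · -- t = 3
    exact hVF fun i => by
      have hi := i.isLt
      have h' : (i : ℕ) = 0 ∨ (i : ℕ) = 1 ∨ (i : ℕ) = 2 := by omega
      rcases h' with h' | h' | h' <;> rw [h'] <;> assumption
  · -- t = 4
    have r0 := hrec 0
    have r1 := hrec 1
    have r2 := hrec 2
    simp only [Finset.sum_range_succ, Finset.sum_range_zero, zero_add, Nat.reduceAdd,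
      Nat.add_zero, hP0, hP1, hP2, hP4, hP5, hP6, hP8, hσt, mul_zero, add_zero, zero_mul,
      one_mul, mul_one] at r0 r1 r2
    by_cases hP3 : P 3 = 0
    · exact hVF fun i => by
        have hi := i.isLt
        have h' : (i : ℕ) = 0 ∨ (i : ℕ) = 1 ∨ (i : ℕ) = 2 ∨ (i : ℕ) = 3 := by omega
        rcases h' with h' | h' | h' | h' <;> rw [h'] <;> assumption
    · have hc3 : σ.coeff 3 = 0 := by
        rcases mul_eq_zero.mp r0 with h | h
        · exact h
        · exact absurd h hP3
      have hc2 : σ.coeff 2 = 0 := by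
        rcases mul_eq_zero.mp r1 with h | h
        · exact h
        · exact absurd h hP3
      have hc1 : σ.coeff 1 = 0 := by
        rcases mul_eq_zero.mp r2 with h | h
        · exact h
        · exact absurd h hP3
      have hall : ∀ j : Fin 4, β j ^ 4 = -σ.coeff 0 := by
        intro j
        have h := hevr j
        simp only [Finset.sum_range_succ, Finset.sum_range_zero, zero_add, pow_zero,
          mul_one, hc1, hc2, hc3, hσt, zero_mul, add_zero, one_mul] at h
        linear_combination h
      rcases aux_three hn h4 (hβn 0) (hβn 1) (hβn 2)
          ((hall 0).trans (hall 1).symm) ((hall 0).trans (hall 2).symm) with h | h | h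
      · exact absurd (hβinj h) (by decide)
      · exact absurd (hβinj h) (by decide)
      · exact absurd (hβinj h) (by decide)
  · -- t = 5
    have r0 := hrec 0
    have r1 := hrec 1
    have r2 := hrec 2
    have r3 := hrec 3
    simp only [Finset.sum_range_succ, Finset.sum_range_zero, zero_add, Nat.reduceAdd,
      Nat.add_zero, hP0, hP1, hP2, hP4, hP5, hP6, hP8, hσt, mul_zero, add_zero, zero_mul,
      one_mul, mul_one] at r0 r1 r2 r3
    by_cases hP3 : P 3 = 0
    · exact hVF fun i => by
        have hi := i.isLt
        have h' : (i : ℕ) = 0 ∨ (i : ℕ) = 1 ∨ (i : ℕ) = 2 ∨ (i : ℕ) = 3 ∨ (i : ℕ) = 4 := by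
          omega
        rcases h' with h' | h' | h' | h' | h' <;> rw [h'] <;> assumption
    · have hc3 : σ.coeff 3 = 0 := by
        rcases mul_eq_zero.mp r0 with h | h
        · exact h
        · exact absurd h hP3
      have hc2 : σ.coeff 2 = 0 := by
        rcases mul_eq_zero.mp r1 with h | h
        · exact h
        · exact absurd h hP3
      -- r2 : σ.coeff 1 * P 3 + P 7 = 0 (up to ring), r3 : σ.coeff 0 * P 3 + σ.coeff 4 * P 7 = 0
      have hc0 : σ.coeff 0 = σ.coeff 4 * σ.coeff 1 := by
        have h' : (σ.coeff 0 - σ.coeff 4 * σ.coeff 1) * P 3 = 0 := by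
          linear_combination r3 - σ.coeff 4 * r2
        rcases mul_eq_zero.mp h' with h | h
        · linear_combination h
        · exact absurd h hP3
      have hall : ∀ j : Fin 5, (β j + σ.coeff 4) * (β j ^ 4 + σ.coeff 1) = 0 := by
        intro j
        have h := hevr j
        simp only [Finset.sum_range_succ, Finset.sum_range_zero, zero_add, pow_zero,
          mul_one, hc2, hc3, hσt, zero_mul, add_zero, one_mul] at h
        linear_combination h - hc0
      have hdisj : ∀ j : Fin 5, β j = -σ.coeff 4 ∨ β j ^ 4 = -σ.coeff 1 := by
        intro j
        rcases mul_eq_zero.mp (hall j) with h | h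
        · exact Or.inl (by linear_combination h)
        · exact Or.inr (by linear_combination h)
      have hF1 : (Finset.univ.filter (fun j : Fin 5 => β j = -σ.coeff 4)).card ≤ 1 := by
        by_contra hh
        push_neg at hh
        obtain ⟨a, ha, a', ha', haa⟩ := Finset.one_lt_card.mp hh
        simp only [Finset.mem_filter] at ha ha'
        exact haa (hβinj (ha.2.trans ha'.2.symm))
      have hF2 : (Finset.univ.filter (fun j : Fin 5 => β j ^ 4 = -σ.coeff 1)).card ≤ 2 := by
        by_contra hh
        push_neg at hh
        obtain ⟨a, a', a'', ha, ha', ha'', h1, h2, h3⟩ := Finset.two_lt_card_iff.mp hh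
        simp only [Finset.mem_filter] at ha ha' ha''
        rcases aux_three hn h4 (hβn a) (hβn a') (hβn a'')
            (ha.2.trans ha'.2.symm) (ha.2.trans ha''.2.symm) with h | h | h
        · exact h1 (hβinj h)
        · exact h2 (hβinj h)
        · exact h3 (hβinj h)
      have hcover : (Finset.univ : Finset (Fin 5)) ⊆
          (Finset.univ.filter (fun j : Fin 5 => β j = -σ.coeff 4)) ∪
          (Finset.univ.filter (fun j : Fin 5 => β j ^ 4 = -σ.coeff 1)) := by
        intro j _
        rcases hdisj j with h | h
        · exact Finset.mem_union_left _ (Finset.mem_filter.mpr ⟨Finset.mem_univ _, h⟩)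
        · exact Finset.mem_union_right _ (Finset.mem_filter.mpr ⟨Finset.mem_univ _, h⟩)
      have hcard : (5 : ℕ) ≤ 3 := by
        calc (5 : ℕ) = (Finset.univ : Finset (Fin 5)).card := by simp
          _ ≤ _ := Finset.card_le_card hcover
          _ ≤ _ + _ := Finset.card_union_le _ _
          _ ≤ 3 := by omega
      omega

/-- If the defining set of a cyclic code of length `n` over `F_q` contains
`{0, 1, 2, 4, 5, 6, 8}` and `4 ∤ n`, then the minimum distance is at least `6`:
every nonzero codeword has Hamming weight `≥ 6`. -/
theorem cyclic_code_min_dist (Fq : Type*) [Field Fq] [Fintype Fq]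
    (n : ℕ) (hn : 0 < n) (hcop : Nat.Coprime n (Fintype.card Fq))
    (h4 : ¬ (4 ∣ n))
    (α : AlgebraicClosure Fq) (hα : orderOf α = n)
    (S : Finset ℕ) (hS : ({0, 1, 2, 4, 5, 6, 8} : Finset ℕ) ⊆ S)
    (c : Polynomial Fq) (hc : c ≠ 0) (hdeg : c.natDegree < n)
    (hroot : ∀ i ∈ S, Polynomial.aeval (α ^ i) c = 0) :
    6 ≤ c.support.card := by
  classical
  by_contra hlt
  push_neg at hlt
  have hα1 : α ^ n = 1 := by rw [← hα]; exact pow_orderOf_eq_one α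
  have hα0 : α ≠ 0 := by
    intro h
    rw [h, zero_pow hn.ne'] at hα1
    exact zero_ne_one hα1
  have hkey : ∀ a b : ℕ, a ≤ b → b < n → α ^ a = α ^ b → a = b := by
    intro a b hab hb h
    have h1 : α ^ a * α ^ (b - a) = α ^ a * 1 := by
      rw [mul_one, ← pow_add, Nat.add_sub_cancel' hab, ← h]
    have h2 : α ^ (b - a) = 1 := mul_left_cancel₀ (pow_ne_zero _ hα0) h1
    have h3 : n ∣ b - a := hα ▸ orderOf_dvd_of_pow_eq_one h2
    rcases Nat.eq_zero_or_pos (b - a) with h0 | hpos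
    · omega
    · have := Nat.le_of_dvd hpos h3; omega
  have hpowinj : ∀ a b : ℕ, a < n → b < n → α ^ a = α ^ b → a = b := by
    intro a b ha hb h
    rcases le_total a b with hab | hab
    · exact hkey a b hab hb h
    · exact (hkey b a hab ha h.symm).symm
  have hT : c.support.Nonempty := Polynomial.nonempty_support_iff.mpr hc
  have ht1 : 0 < c.support.card := Finset.card_pos.mpr hT
  set e := c.support.orderEmbOfFin (rfl : c.support.card = c.support.card) with he
  have hmem : ∀ j, e j ∈ c.support := fun j => Finset.orderEmbOfFin_mem _ _ _
  have hlt' : ∀ j, (e j : ℕ) < n := fun j =>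
    lt_of_le_of_lt (Polynomial.le_natDegree_of_mem_supp _ (hmem j)) hdeg
  have himg : Finset.image (⇑e) Finset.univ = c.support := by
    apply Finset.coe_injective
    rw [Finset.coe_image, Finset.coe_univ, Set.image_univ]
    exact c.support.range_orderEmbOfFin _
  refine aux_core hn h4 ht1 hlt
      (fun j => α ^ (e j : ℕ))
      (fun j => algebraMap Fq (AlgebraicClosure Fq) (c.coeff (e j)))
      (fun i => Polynomial.aeval (α ^ i) c) ?_ ?_ ?_ ?_ ?_
  · intro j k h
    exact e.injective (hpowinj _ _ (hlt' j) (hlt' k) h)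
  · intro j
    rw [← pow_mul, mul_comm, pow_mul, hα1, one_pow]
  · intro j h
    beta_reduce at h
    have h0 : c.coeff (e j) = 0 :=
      (algebraMap Fq (AlgebraicClosure Fq)).injective (by rw [h, map_zero])
    exact Polynomial.mem_support_iff.mp (hmem j) h0
  · intro i
    beta_reduce
    rw [Polynomial.aeval_def, Polynomial.eval₂_eq_sum, Polynomial.sum_def]
    conv_lhs => rw [← himg]
    rw [Finset.sum_image (fun x _ y _ h => e.injective h)]
    refine Finset.sum_congr rfl fun j _ => ?_
    rw [pow_right_comm]
  · intro i hi
    exact hroot i (hS hi)
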